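/- There is a bijection between the set O_{2n,2} of oscillating domino tableaux of length 2n with all shapes having at most two columns and the set P_{2n} of Dyck path packings of length 2n. -/

import Mathlib

/-
A shape with at most two columns is determined by its column lengths `c₀ ≥ c₁`, and every shape
of an oscillating domino tableau has an even number of cells. Adding a domino raises `c₀` or `c₁`
by two, or raises both by one when `c₀ = c₁`. In the coordinates `D = (c₀ + c₁) / 2` and
`E = (c₀ - c₁) / 2` these three moves say that `D` goes up while `E` goes up, goes down, or stays
at height `0`; removing a domino is the same move with `D` going down. So the pair `(D, E)` is a
Dyck path packing, and `c₀ = D + E`, `c₁ = D - E` recovers the tableau.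
-/

/-- Two cells of `ℕ × ℕ` are adjacent. -/
def CellAdj (p q : ℕ × ℕ) : Prop :=
  (p.1 = q.1 ∧ (p.2 + 1 = q.2 ∨ q.2 + 1 = p.2)) ∨
  (p.2 = q.2 ∧ (p.1 + 1 = q.1 ∨ q.1 + 1 = p.1))

/-- `lam` is obtained from `μ` by adding a domino (two adjacent cells). -/
def IsDominoAdd (μ lam : YoungDiagram) : Prop :=
  μ ≤ lam ∧ (lam.cells \ μ.cells).card = 2 ∧
    ∀ p ∈ lam.cells \ μ.cells, ∀ q ∈ lam.cells \ μ.cells, p ≠ q → CellAdj p q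

/-- An oscillating domino tableau of length `2n` whose shapes all have at most two
columns (every cell lies in column 0 or 1). -/
def IsOscDominoTwoCol (n : ℕ) (T : Fin (2*n + 1) → YoungDiagram) : Prop :=
  T 0 = ⊥ ∧ T (Fin.last (2*n)) = ⊥ ∧
  (∀ i : Fin (2*n), IsDominoAdd (T i.castSucc) (T i.succ) ∨
    IsDominoAdd (T i.succ) (T i.castSucc)) ∧
  ∀ i, ∀ p ∈ (T i).cells, p.2 < 2

/-- A Dyck path of length `2n`, encoded by its heights. -/
def IsDyckPath (n : ℕ) (h : Fin (2*n + 1) → ℕ) : Prop :=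
  h 0 = 0 ∧ h (Fin.last (2*n)) = 0 ∧
  ∀ i : Fin (2*n), h i.succ = h i.castSucc + 1 ∨ h i.castSucc = h i.succ + 1

/-- A dispersed Dyck path of length `2n`: up/down steps, and horizontal steps
only at height 0. -/
def IsDispersedDyck (n : ℕ) (h : Fin (2*n + 1) → ℕ) : Prop :=
  h 0 = 0 ∧ h (Fin.last (2*n)) = 0 ∧
  ∀ i : Fin (2*n), h i.succ = h i.castSucc + 1 ∨ h i.castSucc = h i.succ + 1 ∨
    (h i.succ = h i.castSucc ∧ h i.castSucc = 0)

/-- A Dyck path packing of length `2n`: a Dyck path `D` and a dispersed Dyck path `E`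
with `E` weakly below `D`. -/
def IsDyckPacking (n : ℕ) (D E : Fin (2*n + 1) → ℕ) : Prop :=
  IsDyckPath n D ∧ IsDispersedDyck n E ∧ ∀ i, E i ≤ D i

namespace YoungDiagram

theorem colLen_eq_of_forall_mem_iff {μ : YoungDiagram} {j c : ℕ}
    (h : ∀ i, (i, j) ∈ μ ↔ i < c) : μ.colLen j = c :=
  eq_of_forall_lt_iff fun i => by rw [← mem_iff_lt_colLen, h]

theorem colLen_bot (j : ℕ) : (⊥ : YoungDiagram).colLen j = 0 :=
  colLen_eq_of_forall_mem_iff fun i => by simp [notMem_bot]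

theorem mem_cells_sdiff {μ ν : YoungDiagram} {p : ℕ × ℕ} :
    p ∈ ν.cells \ μ.cells ↔ p ∈ ν ∧ p ∉ μ := by
  simp only [Finset.mem_sdiff, mem_cells]

def twoCol (a b : ℕ) : YoungDiagram where
  cells := Finset.range a ×ˢ {0} ∪ Finset.range (min b a) ×ˢ {1}
  isLowerSet := by
    rintro ⟨i, j⟩ ⟨i', j'⟩ ⟨hi, hj⟩
    simp only [Finset.coe_union, Finset.coe_product, Finset.coe_range, Finset.coe_singleton,
      Set.mem_union, Set.mem_prod, Set.mem_Iio, Set.mem_singleton_iff] at hi hj ⊢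
    omega

theorem mem_twoCol {a b i j : ℕ} :
    (i, j) ∈ twoCol a b ↔ (i < a ∧ j = 0) ∨ (i < min b a ∧ j = 1) := by
  rw [← mem_cells]
  simp only [twoCol, Finset.mem_union, Finset.mem_product, Finset.mem_range,
    Finset.mem_singleton]

theorem snd_lt_two_of_mem_twoCol {a b : ℕ} : ∀ p ∈ (twoCol a b).cells, p.2 < 2 := by
  rintro ⟨i, j⟩ hp
  rw [mem_cells, mem_twoCol] at hp
  omega

theorem colLen_twoCol_zero (a b : ℕ) : (twoCol a b).colLen 0 = a :=
  colLen_eq_of_forall_mem_iff fun i => by simp [mem_twoCol]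

theorem colLen_twoCol_one (a b : ℕ) : (twoCol a b).colLen 1 = min b a :=
  colLen_eq_of_forall_mem_iff fun i => by simp [mem_twoCol]

theorem card_twoCol (a b : ℕ) : (twoCol a b).card = a + min b a := by
  rw [YoungDiagram.card, twoCol, Finset.card_union_of_disjoint]
  · simp
  · rw [Finset.disjoint_left]
    simp

theorem twoCol_eq_bot_iff {a b : ℕ} : twoCol a b = ⊥ ↔ a = 0 := by
  refine ⟨fun h => by rw [← colLen_twoCol_zero a b, h, colLen_bot], ?_⟩
  rintro rfl
  ext ⟨i, j⟩
  simp [mem_twoCol]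

theorem eq_twoCol_colLen {μ : YoungDiagram} (h : ∀ p ∈ μ.cells, p.2 < 2) :
    μ = twoCol (μ.colLen 0) (μ.colLen 1) := by
  have hanti := μ.colLen_anti 0 1 zero_le_one
  ext ⟨i, j⟩
  simp only [mem_cells, mem_twoCol]
  constructor
  · intro hi
    have hj : j < 2 := h (i, j) hi
    rw [mem_iff_lt_colLen] at hi
    interval_cases j <;> omega
  · rintro (⟨hi, rfl⟩ | ⟨hi, rfl⟩) <;> rw [mem_iff_lt_colLen] <;> omega

theorem twoCol_le_twoCol_iff {a b c d : ℕ} (hba : b ≤ a) (hdc : d ≤ c) :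
    twoCol a b ≤ twoCol c d ↔ a ≤ c ∧ b ≤ d := by
  constructor
  · intro h
    have h0 : (a - 1, 0) ∈ twoCol a b → (a - 1, 0) ∈ twoCol c d := @h _
    have h1 : (b - 1, 1) ∈ twoCol a b → (b - 1, 1) ∈ twoCol c d := @h _
    simp only [mem_twoCol, and_true] at h0 h1
    omega
  · rintro ⟨hac, hbd⟩ ⟨i, j⟩
    simp only [mem_twoCol]
    omega

end YoungDiagram

theorem CellAdj.symm {p q : ℕ × ℕ} (h : CellAdj p q) : CellAdj q p := by
  unfold CellAdj at *
  omega

theorem CellAdj.ne {p q : ℕ × ℕ} (h : CellAdj p q) : p ≠ q := by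
  rintro rfl
  unfold CellAdj at h
  omega

namespace IsDominoAdd

theorem card_eq {μ ν : YoungDiagram} (h : IsDominoAdd μ ν) : ν.card = μ.card + 2 := by
  have hsub : μ.cells ⊆ ν.cells := YoungDiagram.cells_subset_iff.2 h.1
  have hcard := h.2.1
  rw [Finset.card_sdiff_of_subset hsub] at hcard
  have hle := Finset.card_le_card hsub
  unfold YoungDiagram.card
  omega

theorem of_sdiff_eq_pair {μ ν : YoungDiagram} {p q : ℕ × ℕ} (hle : μ ≤ ν)
    (hsdiff : ν.cells \ μ.cells = {p, q}) (hpq : CellAdj p q) : IsDominoAdd μ ν := by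
  refine ⟨hle, by rw [hsdiff, Finset.card_pair hpq.ne], ?_⟩
  rw [hsdiff]
  simp only [Finset.mem_insert, Finset.mem_singleton]
  rintro x (rfl | rfl) y (rfl | rfl) hxy
  exacts [absurd rfl hxy, hpq, hpq.symm, absurd rfl hxy]

end IsDominoAdd

open YoungDiagram

theorem isDominoAdd_twoCol_iff {a b c d : ℕ} (hba : b ≤ a) (hdc : d ≤ c) :
    IsDominoAdd (twoCol a b) (twoCol c d) ↔
      (c = a + 2 ∧ d = b) ∨ (c = a ∧ d = b + 2) ∨ (a = b ∧ c = a + 1 ∧ d = b + 1) := by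
  constructor
  · intro h
    obtain ⟨hac, hbd⟩ := (twoCol_le_twoCol_iff hba hdc).1 h.1
    have hcard := h.card_eq
    rw [card_twoCol, card_twoCol, min_eq_left hba, min_eq_left hdc] at hcard
    have hsquare : c = a + 1 → d = b + 1 → a = b := by
      rintro rfl rfl
      have hadj := h.2.2 (a, 0) (by rw [mem_cells_sdiff, mem_twoCol, mem_twoCol]; omega)
        (b, 1) (by rw [mem_cells_sdiff, mem_twoCol, mem_twoCol]; omega) (by simp)
      unfold CellAdj at hadj
      omega
    omega
  · intro hcases
    have hle : twoCol a b ≤ twoCol c d := (twoCol_le_twoCol_iff hba hdc).2 (by omega)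
    have hpair {p q : ℕ × ℕ} (hpq : CellAdj p q)
        (hsdiff : ∀ i j, (i, j) ∈ twoCol c d ∧ (i, j) ∉ twoCol a b ↔ (i, j) = p ∨ (i, j) = q) :
        IsDominoAdd (twoCol a b) (twoCol c d) := by
      refine .of_sdiff_eq_pair hle ?_ hpq
      ext ⟨i, j⟩
      rw [mem_cells_sdiff, hsdiff, Finset.mem_insert, Finset.mem_singleton]
    rcases hcases with ⟨rfl, rfl⟩ | ⟨rfl, rfl⟩ | ⟨rfl, rfl, rfl⟩
    · refine hpair (p := (a, 0)) (q := (a + 1, 0)) (by unfold CellAdj; omega) fun i j => ?_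
      simp only [mem_twoCol, Prod.mk.injEq]
      omega
    · refine hpair (p := (b, 1)) (q := (b + 1, 1)) (by unfold CellAdj; omega) fun i j => ?_
      simp only [mem_twoCol, Prod.mk.injEq]
      omega
    · refine hpair (p := (a, 0)) (q := (a, 1)) (by unfold CellAdj; omega) fun i j => ?_
      simp only [mem_twoCol, Prod.mk.injEq]
      omega

theorem isDominoStep_twoCol_iff {D E D' E' : ℕ} (h : E ≤ D) (h' : E' ≤ D') :
    (IsDominoAdd (twoCol (D + E) (D - E)) (twoCol (D' + E') (D' - E')) ∨
        IsDominoAdd (twoCol (D' + E') (D' - E')) (twoCol (D + E) (D - E))) ↔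
      (D' = D + 1 ∨ D = D' + 1) ∧ (E' = E + 1 ∨ E = E' + 1 ∨ (E' = E ∧ E = 0)) := by
  rw [isDominoAdd_twoCol_iff (by omega) (by omega), isDominoAdd_twoCol_iff (by omega) (by omega)]
  omega

theorem isOscDominoTwoCol_twoCol_iff {n : ℕ} {D E : Fin (2 * n + 1) → ℕ}
    (hED : ∀ i, E i ≤ D i) :
    IsOscDominoTwoCol n (fun i => twoCol (D i + E i) (D i - E i)) ↔ IsDyckPacking n D E := by
  simp only [IsOscDominoTwoCol, IsDyckPacking, IsDyckPath, IsDispersedDyck, twoCol_eq_bot_iff,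
    Nat.add_eq_zero_iff, isDominoStep_twoCol_iff (hED _) (hED _), forall_and]
  have hcols i := @snd_lt_two_of_mem_twoCol (D i + E i) (D i - E i)
  tauto

def dyckHeight (μ : YoungDiagram) : ℕ := (μ.colLen 0 + μ.colLen 1) / 2

def dispersedHeight (μ : YoungDiagram) : ℕ := (μ.colLen 0 - μ.colLen 1) / 2

theorem dispersedHeight_le_dyckHeight (μ : YoungDiagram) : dispersedHeight μ ≤ dyckHeight μ := by
  unfold dispersedHeight dyckHeight
  omega

theorem dyckHeight_twoCol {D E : ℕ} (h : E ≤ D) : dyckHeight (twoCol (D + E) (D - E)) = D := by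
  rw [dyckHeight, colLen_twoCol_zero, colLen_twoCol_one]
  omega

theorem dispersedHeight_twoCol {D E : ℕ} (h : E ≤ D) :
    dispersedHeight (twoCol (D + E) (D - E)) = E := by
  rw [dispersedHeight, colLen_twoCol_zero, colLen_twoCol_one]
  omega

theorem twoCol_dyckHeight_dispersedHeight {μ : YoungDiagram} (h : ∀ p ∈ μ.cells, p.2 < 2)
    (heven : Even μ.card) :
    twoCol (dyckHeight μ + dispersedHeight μ) (dyckHeight μ - dispersedHeight μ) = μ := by
  have hanti := μ.colLen_anti 0 1 zero_le_one
  have hcard : μ.card = μ.colLen 0 + μ.colLen 1 := by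
    rw [eq_twoCol_colLen h, card_twoCol, colLen_twoCol_zero, colLen_twoCol_one, min_eq_left hanti]
  obtain ⟨k, hk⟩ := heven
  conv_rhs => rw [eq_twoCol_colLen h]
  congr 1 <;> unfold dyckHeight dispersedHeight <;> omega

theorem IsOscDominoTwoCol.even_card {n : ℕ} {T : Fin (2 * n + 1) → YoungDiagram}
    (hT : IsOscDominoTwoCol n T) (i : Fin (2 * n + 1)) : Even (T i).card := by
  induction i using Fin.induction with
  | zero => simp [hT.1, YoungDiagram.card, YoungDiagram.cells_bot]
  | succ i ih =>
    rcases hT.2.2.1 i with h | h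
    · exact h.card_eq ▸ ih.add even_two
    · exact (Nat.even_add.1 (h.card_eq ▸ ih)).2 even_two

theorem IsOscDominoTwoCol.twoCol_heights {n : ℕ} {T : Fin (2 * n + 1) → YoungDiagram}
    (hT : IsOscDominoTwoCol n T) :
    (fun i => twoCol (dyckHeight (T i) + dispersedHeight (T i))
      (dyckHeight (T i) - dispersedHeight (T i))) = T :=
  funext fun i => twoCol_dyckHeight_dispersedHeight (hT.2.2.2 i) (hT.even_card i)

def oscDominoTwoColEquivDyckPacking (n : ℕ) :
    {T : Fin (2 * n + 1) → YoungDiagram // IsOscDominoTwoCol n T} ≃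
      {p : (Fin (2 * n + 1) → ℕ) × (Fin (2 * n + 1) → ℕ) // IsDyckPacking n p.1 p.2} where
  toFun T := ⟨(fun i => dyckHeight (T.1 i), fun i => dispersedHeight (T.1 i)),
    (isOscDominoTwoCol_twoCol_iff fun i => dispersedHeight_le_dyckHeight _).1
      (by rw [T.2.twoCol_heights]; exact T.2)⟩
  invFun p := ⟨fun i => twoCol (p.1.1 i + p.1.2 i) (p.1.1 i - p.1.2 i),
    (isOscDominoTwoCol_twoCol_iff p.2.2.2).2 p.2⟩
  left_inv T := Subtype.ext T.2.twoCol_heights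
  right_inv p := Subtype.ext <| Prod.ext (funext fun i => dyckHeight_twoCol (p.2.2.2 i))
    (funext fun i => dispersedHeight_twoCol (p.2.2.2 i))

/-- Oscillating domino tableaux of length `2n` with at most two columns are in
bijection with Dyck path packings of length `2n`. -/
theorem stmt7 (n : ℕ) :
    Nonempty ({T : Fin (2*n + 1) → YoungDiagram // IsOscDominoTwoCol n T} ≃
      {p : (Fin (2*n + 1) → ℕ) × (Fin (2*n + 1) → ℕ) // IsDyckPacking n p.1 p.2}) :=
  ⟨oscDominoTwoColEquivDyckPacking n⟩
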